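/- arXiv:1309.2987 — 4 statements merged into one kernel-verified Lean document; each statement's English description precedes it below -/
import Mathlib

section
/- Let f : {±1}^n → {0,1} be a function and let p = E_{x uniform on {±1}^n}[f(x)]. Then E[f(x) · Σ_{i=1}^n x_i] ≤ C · p · sqrt(n · log(1/p)) for some absolute constant C (valid for all 0 < p ≤ 1/2, say). -/
open Real Finset

noncomputable def sgn (b : Bool) : ℝ := if b then 1 else -1

def flip' {n : ℕ} (x : Fin n → Bool) (i : Fin n) : Fin n → Bool :=
  Function.update x i (!x i)

noncomputable def expect {n : ℕ} (f : (Fin n → Bool) → ℝ) : ℝ :=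
  (∑ x : Fin n → Bool, f x) / 2 ^ n

noncomputable def avgSens {n : ℕ} (f : (Fin n → Bool) → ℝ) : ℝ :=
  (∑ x : Fin n → Bool, ∑ i : Fin n,
    if f x ≠ f (flip' x i) then (1 : ℝ) else 0) / 2 ^ n

/-- `f` is monotone nondecreasing in coordinate `i` (where `true ↦ +1`, `false ↦ -1`). -/
def MonoIn {n : ℕ} (f : (Fin n → Bool) → ℝ) (i : Fin n) : Prop :=
  ∀ x, f (Function.update x i false) ≤ f (Function.update x i true)

/-- `f` is monotone nonincreasing in coordinate `i`. -/
def AntiIn {n : ℕ} (f : (Fin n → Bool) → ℝ) (i : Fin n) : Prop :=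
  ∀ x, f (Function.update x i true) ≤ f (Function.update x i false)

def Unate {n : ℕ} (f : (Fin n → Bool) → ℝ) : Prop :=
  ∀ i, MonoIn f i ∨ AntiIn f i

/-!
Proof idea: an exponential-moment (Chernoff) argument. Since `y ≤ exp (y - 1)`, for `0 ≤ a ≤ 1`
and `λ > 0` we have `a u ≤ a t + exp (λ (u - t) - 1) / λ`. Averaging with `a = f x`, `u = ∑ xᵢ`
and using `E[exp (λ ∑ xᵢ)] = cosh λ ^ n ≤ exp (n λ² / 2)` gives, for the best `t`,
`E[f ∑ xᵢ] ≤ p (n λ / 2 + log (1 / p) / λ)`; the choice `λ = √(2 log (1/p) / n)` yields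
the bound with `C = √2`.
-/

section Expect

variable {n : ℕ} {f g : (Fin n → Bool) → ℝ}

lemma expect_mono (h : ∀ x, f x ≤ g x) : expect f ≤ expect g :=
  div_le_div_of_nonneg_right (sum_le_sum fun x _ => h x) (by positivity)

lemma expect_add : expect (fun x => f x + g x) = expect f + expect g := by
  simp only [_root_.expect, sum_add_distrib, add_div]

lemma expect_mul_const (c : ℝ) : expect (fun x => f x * c) = expect f * c := by
  simp only [_root_.expect, ← sum_mul, div_mul_eq_mul_div]

lemma expect_const_mul (c : ℝ) : expect (fun x => c * f x) = c * expect f := by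
  simp only [_root_.expect, ← mul_sum, mul_div_assoc]

end Expect

lemma expect_exp_mul_sum_sgn (n : ℕ) (l : ℝ) :
    expect (fun x : Fin n → Bool => exp (l * ∑ i, sgn (x i))) = cosh l ^ n := by
  have hsum : ∑ x : Fin n → Bool, exp (l * ∑ i, sgn (x i)) = (2 * cosh l) ^ n := by
    simp only [mul_sum, exp_sum]
    rw [← Fintype.sum_pow (fun b => exp (l * sgn b)), Fintype.sum_bool, cosh_eq]
    norm_num [sgn]
    ring
  rw [_root_.expect, hsum, mul_pow, mul_div_cancel_left₀ _ (by positivity)]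

lemma expect_exp_mul_sum_sgn_le (n : ℕ) (l : ℝ) :
    expect (fun x : Fin n → Bool => exp (l * ∑ i, sgn (x i))) ≤ exp (n * l ^ 2 / 2) := by
  rw [expect_exp_mul_sum_sgn, mul_div_assoc, exp_nat_mul]
  exact pow_le_pow_left₀ (cosh_pos l).le (cosh_le_exp_half_sq l) n

lemma mul_le_mul_add_exp {a u t l : ℝ} (ha₀ : 0 ≤ a) (ha₁ : a ≤ 1) (hl : 0 < l) :
    a * u ≤ a * t + exp (l * (u - t) - 1) / l := by
  have hexp : l * (u - t) ≤ exp (l * (u - t) - 1) := by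
    linarith [add_one_le_exp (l * (u - t) - 1)]
  rcases le_total u t with hut | htu
  · nlinarith [(div_pos (exp_pos (l * (u - t) - 1)) hl).le]
  · have : u - t ≤ exp (l * (u - t) - 1) / l := by
      rw [le_div_iff₀ hl]
      linarith
    nlinarith

lemma expect_mul_sum_sgn_le {n : ℕ} {f : (Fin n → Bool) → ℝ} (hf : ∀ x, 0 ≤ f x ∧ f x ≤ 1)
    (hp : 0 < expect f) {l : ℝ} (hl : 0 < l) :
    expect (fun x => f x * ∑ i, sgn (x i)) ≤
      expect f * (n * l / 2 + log (1 / expect f) / l) := by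
  set p := expect f
  set L := log (1 / p)
  -- the threshold `t` is chosen so that `exp (-l t - 1) * exp (n l² / 2) = p`
  set t := n * l / 2 + (L - 1) / l
  have hlt : l * t = n * l ^ 2 / 2 + L - 1 := by
    simp only [t]
    field_simp
    ring
  have hc : exp (-(l * t) - 1) * exp (n * l ^ 2 / 2) = p := by
    rw [← exp_add, show -(l * t) - 1 + n * l ^ 2 / 2 = -L by rw [hlt]; ring,
      exp_neg, exp_log (by positivity), one_div, inv_inv]
  have hpointwise : ∀ x : Fin n → Bool, f x * ∑ i, sgn (x i) ≤
      f x * t + exp (-(l * t) - 1) / l * exp (l * ∑ i, sgn (x i)) := fun x => by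
    rw [div_mul_eq_mul_div, ← exp_add, show -(l * t) - 1 + l * ∑ i, sgn (x i) =
      l * (∑ i, sgn (x i) - t) - 1 by ring]
    exact mul_le_mul_add_exp (hf x).1 (hf x).2 hl
  calc expect (fun x => f x * ∑ i, sgn (x i))
      ≤ p * t + exp (-(l * t) - 1) / l * expect (fun x => exp (l * ∑ i, sgn (x i))) := by
        rw [← expect_mul_const, ← expect_const_mul, ← expect_add]
        exact expect_mono hpointwise
    _ ≤ p * t + exp (-(l * t) - 1) / l * exp (n * l ^ 2 / 2) := by
        gcongr
        exact expect_exp_mul_sum_sgn_le n l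
    _ = p * (n * l / 2 + L / l) := by
        rw [div_mul_eq_mul_div, hc]
        field_simp
        linarith

theorem stmt_0 :
    ∃ C : ℝ, 0 < C ∧ ∀ (n : ℕ) (f : (Fin n → Bool) → ℝ),
      (∀ x, f x = 0 ∨ f x = 1) →
      0 < expect f → expect f ≤ 1 / 2 →
      expect (fun x => f x * ∑ i : Fin n, sgn (x i)) ≤
        C * expect f * Real.sqrt (n * Real.log (1 / expect f)) := by
  refine ⟨√2, by positivity, fun n f hf01 hp hp_half => ?_⟩
  rcases Nat.eq_zero_or_pos n with rfl | hn
  · simp [_root_.expect]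
  set p := expect f
  set L := log (1 / p)
  have hL : 0 < L := log_pos (by rw [lt_div_iff₀ hp]; linarith)
  have hs : 0 < √(n * L) := by positivity
  have hf : ∀ x, 0 ≤ f x ∧ f x ≤ 1 := fun x => by rcases hf01 x with h | h <;> simp [h]
  -- `λ = √(2 L / n)`, written without a square root of a quotient
  calc expect (fun x => f x * ∑ i, sgn (x i))
      ≤ p * (n * (√2 * L / √(n * L)) / 2 + L / (√2 * L / √(n * L))) :=
        expect_mul_sum_sgn_le hf hp (by positivity)
    _ = √2 * p * √(n * L) := by
        have h2 : √2 ^ 2 = 2 := sq_sqrt (by norm_num)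
        have hnL : √(n * L) ^ 2 = n * L := sq_sqrt (by positivity)
        field_simp
        nlinarith [h2, hnL]
end

section
/- Let f_m : {±1}^n → {0,1} be unate (for each coordinate i, f_m is either nondecreasing or nonincreasing in x_i), let F_{m-1} : {±1}^n → {0,1} be arbitrary, and let F_m = F_{m-1} ∨ f_m. Set S_m = F_m − F_{m-1} and p_m = E[S_m(x)]. Then as(F_m) − as(F_{m-1}) ≤ C · p_m · sqrt(n · log(1/p_m)) for an absolute constant C. -/
open Real Finset

/-
Let `a = F_m - F_{m-1}`, which takes values in `{0, 1}`. Orienting each coordinate so that `f_m`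
is nondecreasing along it, the gain in disagreement of `F_m` over `F_{m-1}` on each edge is at most
the increase of `a` along that edge. Summing over edges, `as(F_m) - as(F_{m-1}) ≤ 2 ∑ᵢ |â({i})|`,
which by Cauchy–Schwarz is at most `2 √(n W¹[a])`. The level-1 inequality
`W¹[a] ≤ 2 p² log (1/p)`, for `a` with values in `[0, 1]` and mean `p`, follows from Gibbs's
inequality `E[a X] ≤ p log (E[e^X] / p)` applied to `X = p⁻¹ ∑ᵢ â({i}) xᵢ`, since Hoeffding's lemma
`cosh t ≤ exp (t² / 2)` bounds `E[e^X]` by `exp (W¹[a] / (2 p²))`.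
-/

lemma ite_ne_max_sub_ite_ne_le {f₀ f₁ g₀ g₁ : ℝ} (hf₀ : f₀ = 0 ∨ f₀ = 1) (hf₁ : f₁ = 0 ∨ f₁ = 1)
    (hg₀ : g₀ = 0 ∨ g₀ = 1) (hg₁ : g₁ = 0 ∨ g₁ = 1) (hf : f₀ ≤ f₁) :
    (if max g₀ f₀ ≠ max g₁ f₁ then (1 : ℝ) else 0) - (if g₀ ≠ g₁ then 1 else 0) ≤
      (max g₁ f₁ - g₁) - (max g₀ f₀ - g₀) := by
  rcases hf₀ with rfl | rfl <;> rcases hf₁ with rfl | rfl <;>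
    rcases hg₀ with rfl | rfl <;> rcases hg₁ with rfl | rfl <;> norm_num at *

lemma sum_abs_le_sqrt_card_mul_sum_sq {ι : Type*} [Fintype ι] (c : ι → ℝ) :
    ∑ i, |c i| ≤ √(Fintype.card ι * ∑ i, c i ^ 2) := by
  refine (le_abs_self _).trans (Real.abs_le_sqrt ?_)
  simpa only [sq_abs, Finset.card_univ] using
    sq_sum_le_card_mul_sum_sq (s := Finset.univ) (f := fun i => |c i|)

lemma sum_mul_le_mul_log_sum_exp_div {ι : Type*} [Fintype ι] {a : ι → ℝ} (X : ι → ℝ)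
    (ha : ∀ i, 0 ≤ a i ∧ a i ≤ 1) (hP : 0 < ∑ i, a i) :
    ∑ i, a i * X i ≤ (∑ i, a i) * log ((∑ i, exp (X i)) / ∑ i, a i) := by
  set P := ∑ i, a i
  set M := ∑ i, exp (X i)
  have hM : 0 < M :=
    Finset.sum_pos (fun i _ => exp_pos _) (Finset.nonempty_of_sum_ne_zero hP.ne')
  -- the tangent line `y ≤ c + exp (y - c - 1)` of `exp`, at the point `c` where the
  -- exponential terms add up to `P`
  set c := log (M / P) - 1
  have hpt : ∀ i, a i * X i ≤ a i * c + exp (X i) * (P / M) := by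
    intro i
    have htangent : X i - c ≤ exp (X i - c - 1) := by linarith [add_one_le_exp (X i - c - 1)]
    have hexp : exp (X i - c - 1) = exp (X i) * (P / M) := by
      rw [show X i - c - 1 = X i - log (M / P) by ring, exp_sub, exp_log (by positivity)]
      field_simp
    rw [hexp] at htangent
    nlinarith [(ha i).1, (ha i).2, mul_nonneg (exp_pos (X i)).le (div_pos hP hM).le]
  calc ∑ i, a i * X i ≤ ∑ i, (a i * c + exp (X i) * (P / M)) := Finset.sum_le_sum fun i _ => hpt i
    _ = P * log (M / P) := by
      rw [Finset.sum_add_distrib, ← Finset.sum_mul, ← Finset.sum_mul]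
      field_simp
      ring

noncomputable def levelOneCoeff {n : ℕ} (f : (Fin n → Bool) → ℝ) (i : Fin n) : ℝ :=
  expect fun x => f x * sgn (x i)

noncomputable def levelOneWeight {n : ℕ} (f : (Fin n → Bool) → ℝ) : ℝ :=
  ∑ i, levelOneCoeff f i ^ 2

section Cube

variable {n : ℕ}

lemma expect_nonneg {f : (Fin n → Bool) → ℝ} (hf : ∀ x, 0 ≤ f x) : 0 ≤ expect f :=
  div_nonneg (Finset.sum_nonneg fun x _ => hf x) (by positivity)

lemma flip'_flip' (x : Fin n → Bool) (i : Fin n) : flip' (flip' x i) i = x := by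
  simp [flip']

lemma sum_comp_flip' (i : Fin n) (g : (Fin n → Bool) → ℝ) :
    ∑ x, g (flip' x i) = ∑ x, g x :=
  Fintype.sum_bijective (flip' · i) (Function.Involutive.bijective (flip'_flip' · i)) _ _
    fun _ => rfl

lemma sgn_not (b : Bool) : sgn (!b) = -sgn b := by
  cases b <;> simp [sgn]

lemma ne_flip'_iff (F : (Fin n → Bool) → ℝ) (x : Fin n → Bool) (i : Fin n) :
    F x ≠ F (flip' x i) ↔ F (Function.update x i false) ≠ F (Function.update x i true) := by
  cases hx : x i
  · rw [flip', hx, ← hx, Function.update_eq_self, hx]; rfl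
  · rw [flip', hx, ← hx, Function.update_eq_self, hx, ne_comm]; rfl

lemma update_true_sub_update_false (g : (Fin n → Bool) → ℝ) (x : Fin n → Bool) (i : Fin n) :
    g (Function.update x i true) - g (Function.update x i false) =
      sgn (x i) * (g x - g (flip' x i)) := by
  cases hx : x i
  · rw [flip', hx, ← hx, Function.update_eq_self, hx]; simp [sgn]
  · rw [flip', hx, ← hx, Function.update_eq_self, hx]; simp [sgn]

lemma sum_update_true_sub_update_false (g : (Fin n → Bool) → ℝ) (i : Fin n) :
    ∑ x, (g (Function.update x i true) - g (Function.update x i false)) =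
      2 * ∑ x, g x * sgn (x i) := by
  have hflip : ∑ x, sgn (x i) * g (flip' x i) = -∑ x, g x * sgn (x i) := by
    rw [← sum_comp_flip' i, ← Finset.sum_neg_distrib]
    refine Finset.sum_congr rfl fun x _ => ?_
    rw [flip'_flip', flip', Function.update_self, sgn_not]
    ring
  simp only [update_true_sub_update_false, mul_sub, Finset.sum_sub_distrib, hflip]
  simp only [mul_comm (sgn _)]
  ring

lemma avgSens_eq (F : (Fin n → Bool) → ℝ) :
    avgSens F = (∑ i, ∑ x, if F (Function.update x i false) ≠ F (Function.update x i true)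
      then (1 : ℝ) else 0) / 2 ^ n := by
  rw [avgSens, Finset.sum_comm]
  simp only [ne_flip'_iff]

lemma sum_sensitivity_gain_le {f g F : (Fin n → Bool) → ℝ} (hf : ∀ x, f x = 0 ∨ f x = 1)
    (hg : ∀ x, g x = 0 ∨ g x = 1) (hF : ∀ x, F x = max (g x) (f x)) {i : Fin n}
    (hfi : MonoIn f i ∨ AntiIn f i) :
    ∑ x, ((if F (Function.update x i false) ≠ F (Function.update x i true) then (1 : ℝ) else 0) -
        (if g (Function.update x i false) ≠ g (Function.update x i true) then 1 else 0)) ≤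
      2 * |∑ x, (F x - g x) * sgn (x i)| := by
  rw [← abs_two, ← abs_mul, ← sum_update_true_sub_update_false (fun x => F x - g x)]
  simp only [hF]
  rcases hfi with hmono | hanti
  · refine (Finset.sum_le_sum fun x _ => ?_).trans (le_abs_self _)
    exact ite_ne_max_sub_ite_ne_le (hf _) (hf _) (hg _) (hg _) (hmono x)
  · refine (Finset.sum_le_sum fun x _ => ?_).trans
      ((Finset.sum_neg_distrib _).trans_le (neg_le_abs _))
    have h := ite_ne_max_sub_ite_ne_le (hf _) (hf _) (hg (Function.update x i true))
      (hg (Function.update x i false)) (hanti x)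
    simpa only [ne_comm (a := max (g (Function.update x i true)) _),
      ne_comm (a := g (Function.update x i true)), neg_sub] using h

lemma avgSens_sub_le_sum_abs_levelOneCoeff {f g F : (Fin n → Bool) → ℝ}
    (hf : ∀ x, f x = 0 ∨ f x = 1) (hg : ∀ x, g x = 0 ∨ g x = 1)
    (hF : ∀ x, F x = max (g x) (f x)) (hunate : Unate f) :
    avgSens F - avgSens g ≤ 2 * ∑ i, |levelOneCoeff (fun x => F x - g x) i| := by
  have hN : (0 : ℝ) < 2 ^ n := by positivity
  rw [avgSens_eq, avgSens_eq, ← sub_div, ← Finset.sum_sub_distrib, Finset.mul_sum, Finset.sum_div]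
  refine Finset.sum_le_sum fun i _ => ?_
  rw [levelOneCoeff, expect.eq_1, abs_div, abs_of_pos hN, mul_div_assoc',
    div_le_div_iff_of_pos_right hN, ← Finset.sum_sub_distrib]
  exact sum_sensitivity_gain_le hf hg hF (hunate i)

lemma expect_mul_le_mul_log_expect_exp_div {a : (Fin n → Bool) → ℝ} (X : (Fin n → Bool) → ℝ)
    (ha : ∀ x, 0 ≤ a x ∧ a x ≤ 1) (hp : 0 < expect a) :
    expect (fun x => a x * X x) ≤ expect a * log (expect (fun x => exp (X x)) / expect a) := by
  have hN : (0 : ℝ) < 2 ^ n := by positivity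
  have hP : 0 < ∑ x, a x := by rw [expect.eq_1] at hp; exact (div_pos_iff_of_pos_right hN).mp hp
  simp only [expect.eq_1, div_div_div_cancel_right₀ hN.ne']
  rw [div_mul_eq_mul_div, div_le_div_iff_of_pos_right hN]
  exact sum_mul_le_mul_log_sum_exp_div X ha hP

lemma expect_exp_sum_mul_sgn_le (c : Fin n → ℝ) :
    expect (fun x => exp (∑ i, c i * sgn (x i))) ≤ exp (∑ i, c i ^ 2 / 2) := by
  have hsum : ∑ x : Fin n → Bool, exp (∑ i, c i * sgn (x i)) = ∏ i, 2 * cosh (c i) := by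
    simp_rw [exp_sum]
    rw [← Fintype.prod_sum fun i (b : Bool) => exp (c i * sgn b)]
    refine Finset.prod_congr rfl fun i _ => ?_
    rw [Fintype.sum_bool, cosh_eq]
    simp only [sgn, ↓reduceIte, Bool.false_eq_true, mul_one, mul_neg]
    ring
  rw [expect.eq_1, hsum, div_le_iff₀ (by positivity), exp_sum, mul_comm, ← Fin.prod_const,
    ← Finset.prod_mul_distrib]
  exact Finset.prod_le_prod (fun i _ => by positivity)
    fun i _ => by linarith [cosh_le_exp_half_sq (c i)]

lemma expect_mul_sum_mul_sgn (a : (Fin n → Bool) → ℝ) (c : Fin n → ℝ) :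
    expect (fun x => a x * ∑ i, c i * sgn (x i)) = ∑ i, c i * levelOneCoeff a i := by
  simp only [levelOneCoeff, expect.eq_1, Finset.sum_div, Finset.mul_sum]
  rw [Finset.sum_comm]
  refine Finset.sum_congr rfl fun i _ => Finset.sum_congr rfl fun x _ => ?_
  ring

theorem levelOneWeight_le {a : (Fin n → Bool) → ℝ} (ha : ∀ x, 0 ≤ a x ∧ a x ≤ 1) :
    levelOneWeight a ≤ 2 * expect a ^ 2 * log (1 / expect a) := by
  set p := expect a
  set W := levelOneWeight a with hW
  have hp0 : 0 ≤ p := expect_nonneg fun x => (ha x).1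
  rcases hp0.eq_or_lt with hp | hp
  · have hsum : ∑ x, a x = 0 := by simpa [p, expect.eq_1] using hp.symm
    have ha0 : ∀ x, a x = 0 := fun x =>
      (Finset.sum_eq_zero_iff_of_nonneg fun x _ => (ha x).1).mp hsum x (Finset.mem_univ x)
    simp [W, levelOneWeight, levelOneCoeff, ha0, expect.eq_1, ← hp]
  -- the scale `p⁻¹` is the one that optimises the final bound
  set ℓ : (Fin n → Bool) → ℝ := fun x => ∑ i, levelOneCoeff a i / p * sgn (x i)
  have hcorr : expect (fun x => a x * ℓ x) = W / p := by
    rw [expect_mul_sum_mul_sgn, hW, levelOneWeight, Finset.sum_div]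
    exact Finset.sum_congr rfl fun i _ => by ring
  have hmgf : expect (fun x => exp (ℓ x)) ≤ exp (W / (2 * p ^ 2)) := by
    refine (expect_exp_sum_mul_sgn_le _).trans_eq ?_
    rw [hW, levelOneWeight, Finset.sum_div]
    exact congrArg exp (Finset.sum_congr rfl fun i _ => by ring)
  have hlog : log (expect (fun x => exp (ℓ x)) / p) ≤ W / (2 * p ^ 2) + log (1 / p) := by
    have hE : 0 < expect (fun x => exp (ℓ x)) :=
      div_pos (Finset.sum_pos (fun x _ => exp_pos _) Finset.univ_nonempty) (by positivity)
    rw [div_eq_mul_one_div, log_mul hE.ne' (by positivity)]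
    gcongr
    exact (log_le_log hE hmgf).trans_eq (log_exp _)
  have hgibbs : W / p ≤ p * (W / (2 * p ^ 2) + log (1 / p)) :=
    hcorr ▸ (expect_mul_le_mul_log_expect_exp_div ℓ ha hp).trans
      (mul_le_mul_of_nonneg_left hlog hp.le)
  have h2p : 2 * p * (W / p) ≤ 2 * p * (p * (W / (2 * p ^ 2) + log (1 / p))) :=
    mul_le_mul_of_nonneg_left hgibbs (by positivity)
  field_simp at h2p
  linarith

end Cube

theorem stmt_4 :
    ∃ C : ℝ, 0 < C ∧ ∀ (n : ℕ) (fm Fprev Fm : (Fin n → Bool) → ℝ),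
      (∀ x, fm x = 0 ∨ fm x = 1) → (∀ x, Fprev x = 0 ∨ Fprev x = 1) →
      Unate fm → (∀ x, Fm x = max (Fprev x) (fm x)) →
      avgSens Fm - avgSens Fprev ≤
        C * expect (fun x => Fm x - Fprev x) *
          Real.sqrt (n * Real.log (1 / expect (fun x => Fm x - Fprev x))) := by
  refine ⟨2 * √2, by positivity, fun n fm Fprev Fm hfm hFprev hunate hFm => ?_⟩
  set a := fun x => Fm x - Fprev x
  set p := expect a
  have ha : ∀ x, 0 ≤ a x ∧ a x ≤ 1 := fun x => by
    rcases hfm x with h | h <;> rcases hFprev x with h' | h' <;> norm_num [a, hFm x, h, h']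
  have hp : 0 ≤ p := expect_nonneg fun x => (ha x).1
  calc avgSens Fm - avgSens Fprev ≤ 2 * ∑ i, |levelOneCoeff a i| :=
        avgSens_sub_le_sum_abs_levelOneCoeff hfm hFprev hFm hunate
    _ ≤ 2 * √(n * levelOneWeight a) := by
        gcongr
        simpa only [Fintype.card_fin, levelOneWeight] using
          sum_abs_le_sqrt_card_mul_sum_sq (levelOneCoeff a)
    _ ≤ 2 * √(n * (2 * p ^ 2 * log (1 / p))) := by
        gcongr
        exact levelOneWeight_le ha
    _ = 2 * √2 * p * √(n * log (1 / p)) := by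
        rw [show (n : ℝ) * (2 * p ^ 2 * log (1 / p)) = (√2 * p) ^ 2 * (n * log (1 / p)) by
            rw [mul_pow, sq_sqrt zero_le_two]; ring,
          sqrt_mul (sq_nonneg _), sqrt_sq (by positivity)]
        ring
end

section
/- Let f : {±1}^n → {0,1} be the indicator of an intersection of k halfspaces and let ε = 1/m for a positive integer m. Then the noise sensitivity satisfies ns_ε(f) ≤ C · sqrt(ε · log(k)) for an absolute constant C (for k ≥ 2), given the bound as(g) ≤ C' sqrt(m log k) for indicators g of intersections of k halfspaces in m variables. -/
open Real Finset

noncomputable def noiseSens {n : ℕ} (ε : ℝ) (f : (Fin n → Bool) → ℝ) : ℝ :=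
  (∑ x : Fin n → Bool, ∑ s : Fin n → Bool,
    (∏ i : Fin n, if s i then ε else 1 - ε) *
      (if f x ≠ f (fun i => xor (s i) (x i)) then (1 : ℝ) else 0)) / 2 ^ n

noncomputable def walshCoeff {n : ℕ} (f : (Fin n → Bool) → ℝ)
    (S : Finset (Fin n)) : ℝ :=
  expect (fun x => f x * ∏ i ∈ S, sgn (x i))

/-! Assign the coordinates to `m` bins by a uniform `β`, pick `z` and bin signs `b` uniformly and
let `x = bin z β b`. Flipping the signs of a uniformly random bin `p` turns `x` into a `1/m`-noisy
copy of `x`: `x` is uniform, and each coordinate lies in bin `p` independently with probability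
`1/m`. Hence `ns_{1/m} f` is `1/m` times the average over `β, z` of the average sensitivity of
`b ↦ f (bin z β b)`. For an intersection of `k` halfspaces this restriction is again an intersection
of `k` halfspaces, in the `m` bin signs, so the assumed bound `C' √(m log k)` on its average
sensitivity gives `ns_{1/m} f ≤ C' √(m log k) / m = C' √(log k / m)`. -/

section Binning

variable {n m : ℕ}

/-- The point `z` with every coordinate of bin `p` multiplied by the sign `b p`: on `Bool`, `==`
is multiplication of the signs `sgn`. -/
def bin (z : Fin n → Bool) (β : Fin n → Fin m) (b : Fin m → Bool) : Fin n → Bool :=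
  fun i => z i == b (β i)

def inBin (β : Fin n → Fin m) (p : Fin m) : Fin n → Bool :=
  fun i => decide (β i = p)

lemma sgn_beq (a b : Bool) : sgn (a == b) = sgn a * sgn b := by
  cases a <;> cases b <;> simp [sgn]

lemma sum_bin_eq_sum (β : Fin n → Fin m) (b : Fin m → Bool) (T : (Fin n → Bool) → ℝ) :
    ∑ z, T (bin z β b) = ∑ x, T x := by
  have hinv : Function.Involutive fun z : Fin n → Bool => bin z β b := by
    intro z; funext i; simp only [bin]; cases z i <;> cases b (β i) <;> rfl
  exact Equiv.sum_comp hinv.toPerm T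

lemma bin_flip' (z : Fin n → Bool) (β : Fin n → Fin m) (b : Fin m → Bool) (p : Fin m) :
    bin z β (flip' b p) = fun i => xor (inBin β p i) (bin z β b i) := by
  funext i
  rcases eq_or_ne (β i) p with h | h
  · simp only [bin, inBin, flip', h, Function.update_self, decide_true]
    cases z i <;> cases b p <;> rfl
  · simp [bin, inBin, flip', h]

lemma card_inBin_eq (p : Fin m) (s : Fin n → Bool) :
    #{β | inBin β p = s} = ∏ i, if s i then 1 else m - 1 := by
  have : ({β | inBin β p = s} : Finset (Fin n → Fin m)) =
      Fintype.piFinset fun i => {c | decide (c = p) = s i} := by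
    ext β; simp [inBin, funext_iff]
  rw [this, Fintype.card_piFinset]
  refine prod_congr rfl fun i _ => ?_
  cases s i <;> simp [filter_ne', filter_eq', card_erase_of_mem]

/-- The indicator of a fixed bin, under a uniformly random assignment of the coordinates to `m`
bins, is distributed as a `1/m`-biased random vector. -/
lemma sum_inBin_div_pow (p : Fin m) (F : (Fin n → Bool) → ℝ) :
    (∑ β : Fin n → Fin m, F (inBin β p)) / m ^ n =
      ∑ s, (∏ i, if s i then (1 : ℝ) / m else 1 - 1 / m) * F s := by
  rw [← sum_fiberwise' univ (inBin · p) F, sum_div]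
  refine sum_congr rfl fun s _ => ?_
  rw [sum_const, card_inBin_eq, nsmul_eq_mul, Nat.cast_prod, mul_div_right_comm,
    ← Fin.prod_const, ← prod_div_distrib]
  congr 1
  refine prod_congr rfl fun i _ => ?_
  cases s i
  · have hm : (m : ℝ) ≠ 0 := Nat.cast_ne_zero.2 p.pos.ne'
    simp [Nat.cast_sub (show 1 ≤ m from p.pos), sub_div, hm]
  · simp

lemma sum_avgSens_bin (f : (Fin n → Bool) → ℝ) (β : Fin n → Fin m) :
    ∑ z, avgSens (fun b => f (bin z β b)) =
      ∑ p, ∑ x, if f x ≠ f (fun i => xor (inBin β p i) (x i)) then (1 : ℝ) else 0 := by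
  simp only [avgSens, bin_flip', ← sum_div]
  set D : (Fin n → Bool) → (Fin n → Bool) → ℝ :=
    fun x s => if f x ≠ f (fun i => xor (s i) (x i)) then 1 else 0
  have hz (b : Fin m → Bool) :
      ∑ z, ∑ p, D (bin z β b) (inBin β p) = ∑ p, ∑ x, D x (inBin β p) := by
    rw [sum_comm]
    exact sum_congr rfl fun p _ => sum_bin_eq_sum β b fun x => D x (inBin β p)
  rw [sum_comm]
  change (∑ b, ∑ z, ∑ p, D (bin z β b) (inBin β p)) / 2 ^ m = ∑ p, ∑ x, D x (inBin β p)
  simp only [hz, sum_const, card_univ, Fintype.card_fun, Fintype.card_bool, Fintype.card_fin,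
    nsmul_eq_mul, Nat.cast_pow, Nat.cast_ofNat]
  exact mul_div_cancel_left₀ _ (by positivity)

theorem noiseSens_one_div_eq (hm : 0 < m) (f : (Fin n → Bool) → ℝ) :
    noiseSens (1 / m) f =
      (∑ β : Fin n → Fin m, ∑ z, avgSens (fun b => f (bin z β b))) / (m ^ n * 2 ^ n) / m := by
  set D : (Fin n → Bool) → (Fin n → Bool) → ℝ :=
    fun x s => if f x ≠ f (fun i => xor (s i) (x i)) then 1 else 0
  have hp (p : Fin m) : (∑ β : Fin n → Fin m, ∑ x, D x (inBin β p)) / m ^ n =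
      ∑ x, ∑ s, (∏ i, if s i then (1 : ℝ) / m else 1 - 1 / m) * D x s := by
    rw [sum_comm, sum_div]
    exact sum_congr rfl fun x _ => sum_inBin_div_pow p (D x)
  calc noiseSens (1 / m) f
      = (∑ x, ∑ s, (∏ i, if s i then (1 : ℝ) / m else 1 - 1 / m) * D x s) / 2 ^ n := rfl
    _ = (∑ p : Fin m, (∑ β : Fin n → Fin m, ∑ x, D x (inBin β p)) / m ^ n) / 2 ^ n / m := by
      simp only [hp, sum_const, card_univ, Fintype.card_fin, nsmul_eq_mul]
      field_simp
    _ = _ := by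
      rw [sum_congr rfl fun β _ => sum_avgSens_bin f β, sum_comm, ← sum_div]
      ring

theorem noiseSens_one_div_le (hm : 0 < m) {f : (Fin n → Bool) → ℝ} {A : ℝ}
    (hA : ∀ (β : Fin n → Fin m) z, avgSens (fun b => f (bin z β b)) ≤ A) :
    noiseSens (1 / m) f ≤ A / m := by
  rw [noiseSens_one_div_eq hm]
  gcongr
  rw [div_le_iff₀ (by positivity)]
  calc ∑ β : Fin n → Fin m, ∑ z, avgSens (fun b => f (bin z β b))
      ≤ ∑ _β : Fin n → Fin m, ∑ _z : Fin n → Bool, A := by gcongr with β _ z _; exact hA β z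
    _ = A * (m ^ n * 2 ^ n) := by simp; ring

end Binning

noncomputable def halfspacesInd {k n : ℕ} (w : Fin k → Fin n → ℝ) (θ : Fin k → ℝ)
    (x : Fin n → Bool) : ℝ :=
  if ∀ j, θ j ≤ ∑ i, w j i * sgn (x i) then 1 else 0

noncomputable def binWeights {n m : ℕ} (w : Fin n → ℝ) (z : Fin n → Bool) (β : Fin n → Fin m) :
    Fin m → ℝ :=
  fun p => ∑ i with β i = p, w i * sgn (z i)

lemma sum_mul_sgn_bin {n m : ℕ} (w : Fin n → ℝ) (z : Fin n → Bool) (β : Fin n → Fin m)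
    (b : Fin m → Bool) :
    ∑ i, w i * sgn (bin z β b i) = ∑ p, binWeights w z β p * sgn (b p) := by
  simp only [binWeights, sum_mul]
  rw [← sum_fiberwise univ β]
  refine sum_congr rfl fun p _ => sum_congr rfl fun i hi => ?_
  rw [bin, sgn_beq, (mem_filter.1 hi).2, mul_assoc]

lemma halfspacesInd_bin {k n m : ℕ} (w : Fin k → Fin n → ℝ) (θ : Fin k → ℝ) (z : Fin n → Bool)
    (β : Fin n → Fin m) (b : Fin m → Bool) :
    halfspacesInd w θ (bin z β b) = halfspacesInd (fun j => binWeights (w j) z β) θ b := by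
  simp only [halfspacesInd, sum_mul_sgn_bin]

theorem stmt_12_general (C' : ℝ)
    (hyp : ∀ (m k : ℕ) (w : Fin k → Fin m → ℝ) (θ : Fin k → ℝ), 2 ≤ k →
      avgSens (fun b : Fin m → Bool =>
          if ∀ j, θ j ≤ ∑ i : Fin m, w j i * sgn (b i) then (1 : ℝ) else 0) ≤
        C' * Real.sqrt (m * Real.log k))
    (n k m : ℕ) (hk : 2 ≤ k) (hm : 0 < m)
    (w : Fin k → Fin n → ℝ) (θ : Fin k → ℝ) :
    noiseSens ((1 : ℝ) / m)
        (fun x => if ∀ j, θ j ≤ ∑ i : Fin n, w j i * sgn (x i)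
          then (1 : ℝ) else 0) ≤
      C' * Real.sqrt ((1 / m) * Real.log k) := by
  have hbinned (β : Fin n → Fin m) (z : Fin n → Bool) :
      avgSens (fun b => halfspacesInd w θ (bin z β b)) ≤ C' * √(m * log k) := by
    rw [funext (halfspacesInd_bin w θ z β)]
    exact hyp m k _ θ hk
  calc noiseSens (1 / m) (halfspacesInd w θ)
      ≤ C' * √(m * log k) / m := noiseSens_one_div_le hm hbinned
    _ = C' * √(1 / m * log k) := by
      have hm' : (0 : ℝ) < m := by exact_mod_cast hm
      rw [mul_div_assoc, show 1 / (m : ℝ) * log k = m * log k / m ^ 2 by field_simp,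
        Real.sqrt_div' _ (by positivity), Real.sqrt_sq hm'.le]

theorem stmt_12 (C' : ℝ) (hC' : 0 < C')
    (hyp : ∀ (m k : ℕ) (w : Fin k → Fin m → ℝ) (θ : Fin k → ℝ), 2 ≤ k →
      avgSens (fun b : Fin m → Bool =>
          if ∀ j, θ j ≤ ∑ i : Fin m, w j i * sgn (b i) then (1 : ℝ) else 0) ≤
        C' * Real.sqrt (m * Real.log k))
    (n k m : ℕ) (hk : 2 ≤ k) (hm : 0 < m)
    (w : Fin k → Fin n → ℝ) (θ : Fin k → ℝ) :
    noiseSens ((1 : ℝ) / m)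
        (fun x => if ∀ j, θ j ≤ ∑ i : Fin n, w j i * sgn (x i)
          then (1 : ℝ) else 0) ≤
      C' * Real.sqrt ((1 / m) * Real.log k) :=
  stmt_12_general C' hyp n k m hk hm w θ
end

section
/- The binned noise model produces the correct joint distribution: partition [n] into m bins uniformly at random (each coordinate independently assigned a uniform bin), choose z uniform on {±1}^n, choose b uniform on {±1}^m, set x_i = b_{bin(i)} · z_i, and obtain y from x by flipping the sign of all coordinates in one uniformly random bin. Then (x, y) has the same distribution as (x', y') where x' is uniform on {±1}^n and y' is obtained from x' by independently flipping each coordinate with probability 1/m. -/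
open Real Finset

/-!
For fixed bin assignment `β`, bin signs `b` and flipped bin `j`, the substitution `x = z ⊕ b ∘ β`
is a bijection of the cube, and the flipped string is `x ⊕ 1[β · = j]`; so averaging over `z`
gives a uniform `x`, and `b` drops out. Averaging then over `β`, the coordinates of the
indicator `1[β · = j]` are independent Bernoulli(1/m) bits, which is the independent-noise model.
-/

section Indicator

variable {ι α : Type*} [Fintype ι] [DecidableEq ι] [Fintype α] [DecidableEq α]

theorem card_filter_indicator_eq (a : α) (s : ι → Bool) :
    #{β : ι → α | (fun i => decide (β i = a)) = s} =
      ∏ i, if s i then 1 else Fintype.card α - 1 := by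
  have hpi : ({β : ι → α | (fun i => decide (β i = a)) = s} : Finset (ι → α)) =
      Fintype.piFinset fun i => {k | decide (k = a) = s i} := by
    ext β
    simp [funext_iff]
  rw [hpi, Fintype.card_piFinset]
  refine prod_congr rfl fun i _ => ?_
  cases s i <;> simp [filter_eq', filter_ne', card_erase_of_mem]

theorem sum_comp_indicator_eq (a : α) (g : (ι → Bool) → ℝ) :
    ∑ β : ι → α, g (fun i => decide (β i = a)) =
      (Fintype.card α : ℝ) ^ Fintype.card ι *
        ∑ s : ι → Bool, (∏ i, if s i then 1 / (Fintype.card α : ℝ) else 1 - 1 / Fintype.card α) *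
          g s := by
  have hα : 0 < Fintype.card α := Fintype.card_pos_iff.mpr ⟨a⟩
  rw [← sum_fiberwise univ (fun (β : ι → α) i => decide (β i = a)), mul_sum]
  refine sum_congr rfl fun s _ => ?_
  rw [sum_congr rfl fun β hβ => congrArg g (mem_filter.mp hβ).2, sum_const, nsmul_eq_mul,
    ← mul_assoc, card_filter_indicator_eq, Nat.cast_prod, ← card_univ (α := ι),
    ← prod_const, ← prod_mul_distrib]
  congr 1
  refine prod_congr rfl fun i _ => ?_
  cases s i
  · simp only [Bool.false_eq_true, ↓reduceIte, Nat.cast_sub hα, Nat.cast_one]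
    field_simp
  · simp [hα.ne']

end Indicator

theorem sum_comp_xor {ι M : Type*} [Fintype ι] [DecidableEq ι] [AddCommMonoid M] (c : ι → Bool)
    (f : (ι → Bool) → M) :
    ∑ z : ι → Bool, f (fun i => xor (c i) (z i)) = ∑ x, f x :=
  Equiv.sum_comp (Function.Involutive.toPerm (fun (z : ι → Bool) i => xor (c i) (z i))
    fun z => by simp) f

theorem ite_not_eq_xor_decide (p : Prop) [Decidable p] (x : Bool) :
    (if p then !x else x) = xor (decide p) x := by
  by_cases h : p <;> simp [h]

theorem sum_flip_bin_eq {ι κ R : Type*} [Fintype ι] [DecidableEq ι] [Fintype κ] [DecidableEq κ]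
    [Semiring R] (β : ι → κ) (φ : (ι → Bool) → (ι → Bool) → R) :
    ∑ z : ι → Bool, ∑ b : κ → Bool, ∑ j : κ,
        φ (fun i => xor (b (β i)) (z i))
          (fun i => if β i = j then !(xor (b (β i)) (z i)) else xor (b (β i)) (z i)) =
      2 ^ Fintype.card κ * ∑ j : κ, ∑ x : ι → Bool, φ x (fun i => xor (decide (β i = j)) (x i)) := by
  have hflip (b : κ → Bool) (j : κ) :
      ∑ z : ι → Bool, φ (fun i => xor (b (β i)) (z i))
        (fun i => if β i = j then !(xor (b (β i)) (z i)) else xor (b (β i)) (z i)) =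
      ∑ x : ι → Bool, φ x (fun i => xor (decide (β i = j)) (x i)) := by
    simp only [ite_not_eq_xor_decide]
    exact sum_comp_xor (fun i => b (β i)) fun x => φ x fun i => xor (decide (β i = j)) (x i)
  rw [sum_comm]
  simp_rw [sum_comm (γ := ι → Bool) (α := κ), hflip]
  simp

theorem stmt_13 {n m : ℕ} (hm : 0 < m)
    (φ : (Fin n → Bool) → (Fin n → Bool) → ℝ) :
    (∑ β : Fin n → Fin m, ∑ z : Fin n → Bool, ∑ b : Fin m → Bool, ∑ j : Fin m,
        φ (fun i => xor (b (β i)) (z i))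
          (fun i => if β i = j then !(xor (b (β i)) (z i))
            else xor (b (β i)) (z i))) /
      ((m : ℝ) ^ n * 2 ^ n * 2 ^ m * m) =
    (∑ x : Fin n → Bool, ∑ s : Fin n → Bool,
        (∏ i : Fin n, if s i then (1 : ℝ) / m else 1 - 1 / m) *
          φ x (fun i => xor (s i) (x i))) / 2 ^ n := by
  set R := ∑ x : Fin n → Bool, ∑ s : Fin n → Bool,
    (∏ i : Fin n, if s i then (1 : ℝ) / m else 1 - 1 / m) * φ x (fun i => xor (s i) (x i))
  have hbins (j : Fin m) :
      ∑ β : Fin n → Fin m, ∑ x : Fin n → Bool, φ x (fun i => xor (decide (β i = j)) (x i)) =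
        (m : ℝ) ^ n * R := by
    rw [sum_comm, mul_sum]
    refine sum_congr rfl fun x _ => ?_
    simpa using sum_comp_indicator_eq j fun s => φ x fun i => xor (s i) (x i)
  have hm' : (m : ℝ) ≠ 0 := Nat.cast_ne_zero.mpr hm.ne'
  simp only [sum_flip_bin_eq, Fintype.card_fin]
  rw [← mul_sum, sum_comm]
  simp only [hbins, sum_const, card_univ, Fintype.card_fin, nsmul_eq_mul]
  field_simp
end
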